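/- arXiv:1701.08014 — 4 statements merged into one kernel-verified Lean document; each statement's English description precedes it below -/
import Mathlib

section
/- Let {e_i}_{i=1}^N be an orthonormal basis of an N-dimensional real inner product space H, let I_1,...,I_k be subsets of {1,...,N}, and let W_j = span{e_i : i ∈ I_j} for j = 1,...,k. If there exists a positive integer m such that every index i ∈ {1,...,N} belongs to exactly m of the sets I_1,...,I_k, then the family of subspaces {W_j}_{j=1}^k does norm retrieval. -/
open scoped RealInnerProductSpace

noncomputable section

/-- A finite family of subspaces of a finite-dimensional real inner product space does
norm retrieval if equality of the norms of all the orthogonal projections of two vectors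
implies equality of the norms of the vectors. -/
def DoesNormRetrieval {H : Type*} [NormedAddCommGroup H] [InnerProductSpace ℝ H]
    [FiniteDimensional ℝ H] {ι : Type*} (W : ι → Submodule ℝ H) : Prop :=
  ∀ x y : H, (∀ i : ι, ‖Submodule.orthogonalProjection (W i) x‖ = ‖Submodule.orthogonalProjection (W i) y‖) →
    ‖x‖ = ‖y‖

/-! Since every basis index lies in exactly `m` of the sets `I j`, Parseval's identity gives
`∑ j, ‖P_j x‖ ^ 2 = m * ‖x‖ ^ 2`: the subspaces form a tight fusion frame, so the norms of the
projections determine `‖x‖`. -/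

open Finset

theorem Finset.sum_sum_mem_eq_nsmul_sum {ι κ M : Type*} [Fintype ι] [Fintype κ] [DecidableEq ι]
    [AddCommMonoid M] {I : κ → Finset ι} {m : ℕ} (hcover : ∀ i, #{j | i ∈ I j} = m)
    (f : ι → M) : ∑ j, ∑ i ∈ I j, f i = m • ∑ i, f i := by
  rw [sum_comm' (t' := univ) (s' := fun i => {j | i ∈ I j}) (by simp), smul_sum]
  exact sum_congr rfl fun i _ => by rw [sum_const, hcover]

theorem Orthonormal.norm_sq_orthogonalProjectionOnto_span {E ι : Type*} [NormedAddCommGroup E]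
    [InnerProductSpace ℝ E] [FiniteDimensional ℝ E] {v : ι → E} (hv : Orthonormal ℝ v)
    (S : Finset ι) (x : E) :
    ‖Submodule.orthogonalProjectionOnto (Submodule.span ℝ (v '' S)) x‖ ^ 2 =
      ∑ i ∈ S, ⟪v i, x⟫ ^ 2 := by
  classical
  let b := OrthonormalBasis.span hv S
  rw [← coe_image, ← b.sum_sq_inner_right, ← sum_coe_sort S]
  refine sum_congr rfl fun i _ => ?_
  rw [Submodule.inner_orthogonalProjectionOnto_eq_of_mem_left, OrthonormalBasis.span_apply]

theorem doesNormRetrieval_of_sum_sq_norm_eq_mul {H ι : Type*} [NormedAddCommGroup H]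
    [InnerProductSpace ℝ H] [FiniteDimensional ℝ H] [Fintype ι] {W : ι → Submodule ℝ H}
    {c : ℝ} (hc : c ≠ 0)
    (hW : ∀ x, ∑ i, ‖Submodule.orthogonalProjectionOnto (W i) x‖ ^ 2 = c * ‖x‖ ^ 2) :
    DoesNormRetrieval W := by
  intro x y hxy
  have hsq : c * ‖x‖ ^ 2 = c * ‖y‖ ^ 2 := by simp only [← hW, hxy]
  exact (pow_left_inj₀ (norm_nonneg x) (norm_nonneg y) two_ne_zero).1
    (mul_left_cancel₀ hc hsq)

theorem stmt_0_general {H : Type*} [NormedAddCommGroup H] [InnerProductSpace ℝ H]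
    [FiniteDimensional ℝ H] {N k : ℕ}
    (e : OrthonormalBasis (Fin N) ℝ H)
    (I : Fin k → Finset (Fin N))
    (W : Fin k → Submodule ℝ H)
    (hW : ∀ j, W j = Submodule.span ℝ (e '' (I j)))
    (m : ℕ) (hm : 0 < m)
    (hcover : ∀ i : Fin N, (Finset.univ.filter (fun j => i ∈ I j)).card = m) :
    DoesNormRetrieval W := by
  obtain rfl : W = fun j => Submodule.span ℝ (e '' (I j)) := funext hW
  refine doesNormRetrieval_of_sum_sq_norm_eq_mul (c := m) (by positivity) fun x => ?_
  simp only [e.orthonormal.norm_sq_orthogonalProjectionOnto_span]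
  rw [sum_sum_mem_eq_nsmul_sum hcover, e.sum_sq_inner_right, nsmul_eq_mul]

theorem stmt_0 {H : Type*} [NormedAddCommGroup H] [InnerProductSpace ℝ H]
    [FiniteDimensional ℝ H] {N k : ℕ}
    (hdim : Module.finrank ℝ H = N)
    (e : OrthonormalBasis (Fin N) ℝ H)
    (I : Fin k → Finset (Fin N))
    (W : Fin k → Submodule ℝ H)
    (hW : ∀ j, W j = Submodule.span ℝ (e '' (I j)))
    (m : ℕ) (hm : 0 < m)
    (hcover : ∀ i : Fin N, (Finset.univ.filter (fun j => i ∈ I j)).card = m) :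
    DoesNormRetrieval W :=
  stmt_0_general e I W hW m hm hcover
end
end

section
/- Let {W_i}_{i=1}^M be subspaces of a finite-dimensional real inner product space H with orthogonal projections {P_i}_{i=1}^M. Then {P_i}_{i=1}^M does norm retrieval if and only if the following holds: for every choice of orthonormal bases {φ_{i,j}}_{j=1}^{d_i} of W_i (where d_i = dim W_i) and every subcollection S ⊆ {(i,j) : 1 ≤ i ≤ M, 1 ≤ j ≤ d_i}, the subspaces (span{φ_{i,j} : (i,j) ∈ S})^⊥ and (span{φ_{i,j} : (i,j) ∈ S^c})^⊥ are orthogonal to each other (every vector of the first is orthogonal to every vector of the second). -/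
/-!
Put `u = x + y` and `w = x - y`. Then `‖P_i x‖ = ‖P_i y‖` reads `⟪P_i u, P_i w⟫ = 0`, so norm
retrieval says that `P_i u ⊥ P_i w` for all `i` forces `u ⊥ w`. For an orthonormal basis `φ_i`
of `W_i`, `⟪P_i u, P_i w⟫ = ∑_j ⟪u, φ_{i,j}⟫ ⟪φ_{i,j}, w⟫`, and every term vanishes when `u` is
orthogonal to the `φ_{i,j}` with `(i,j) ∈ S` and `w` to the others. Conversely, if
`P_i u ⊥ P_i w`, an orthonormal basis of `W_i` through `P_i u / ‖P_i u‖` consists of vectors each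
orthogonal to `P_i u` or to `P_i w`; taking for `S` the pairs with `φ_{i,j} ⊥ u` gives `u ⊥ w`.
-/

open scoped RealInnerProductSpace

noncomputable section

open Submodule Module

section RCLike

open scoped InnerProductSpace

variable {𝕜 E : Type*} [RCLike 𝕜] [NormedAddCommGroup E] [InnerProductSpace 𝕜 E]

theorem Submodule.mem_orthogonal_span_iff {s : Set E} {v : E} :
    v ∈ (span 𝕜 s)ᗮ ↔ ∀ u ∈ s, ⟪u, v⟫_𝕜 = 0 := by
  rw [← span_singleton_le_iff_mem, ← isOrtho_iff_le, isOrtho_comm, isOrtho_span]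
  simp

theorem OrthonormalBasis.span_range_coe {ι : Type*} [Fintype ι] {K : Submodule 𝕜 E}
    (b : OrthonormalBasis ι 𝕜 K) : span 𝕜 (Set.range fun j => (b j : E)) = K := by
  rw [Set.range_comp', ← K.coe_subtype, ← map_span, ← b.coe_toBasis, b.toBasis.span_eq,
    Submodule.map_top, range_subtype]

theorem Orthonormal.inner_orthogonalProjectionOnto_eq_sum {ι : Type*} [Fintype ι] {v : ι → E}
    (hv : Orthonormal 𝕜 v) {K : Submodule 𝕜 E} [K.HasOrthogonalProjection]
    (hK : span 𝕜 (Set.range v) = K) (x y : E) :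
    ⟪(K.orthogonalProjectionOnto x : E), K.orthogonalProjectionOnto y⟫_𝕜 =
      ∑ j, ⟪x, v j⟫_𝕜 * ⟪v j, y⟫_𝕜 := by
  subst hK
  let b := (Basis.span hv.linearIndependent).toOrthonormalBasis
    (by rw [funext (Basis.span_apply _)]; exact orthonormal_span hv)
  rw [← coe_inner, ← b.sum_inner_mul_inner]
  simp [b]

theorem exists_orthonormalBasis_inner_eq_zero_or_inner_eq_zero [FiniteDimensional 𝕜 E]
    {a b : E} (hab : ⟪a, b⟫_𝕜 = 0) :
    ∃ B : OrthonormalBasis (Fin (finrank 𝕜 E)) 𝕜 E, ∀ j, ⟪a, B j⟫_𝕜 = 0 ∨ ⟪b, B j⟫_𝕜 = 0 := by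
  rcases eq_or_ne a 0 with rfl | ha
  · exact ⟨stdOrthonormalBasis 𝕜 E, fun _ => Or.inl (inner_zero_left _)⟩
  have : Nontrivial E := ⟨⟨a, 0, ha⟩⟩
  let j₀ : Fin (finrank 𝕜 E) := ⟨0, finrank_pos⟩
  let e : E := (‖a‖⁻¹ : 𝕜) • a
  have he : Orthonormal 𝕜 (({j₀} : Set _).domRestrict fun _ => e) :=
    orthonormal_subsingleton_iff.2 fun _ => norm_smul_inv_norm ha
  obtain ⟨B, hB⟩ := he.exists_orthonormalBasis_extension_of_card_eq (by simp)
  refine ⟨B, fun j => ?_⟩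
  rcases eq_or_ne j j₀ with rfl | hj
  · right
    rw [hB j₀ rfl, inner_smul_right, ← inner_conj_symm, hab, map_zero, mul_zero]
  · left
    have : ⟪B j₀, B j⟫_𝕜 = 0 := B.orthonormal.2 hj.symm
    rw [hB j₀ rfl, inner_smul_left] at this
    simpa [ha] using this

end RCLike

section Real

variable {H : Type*} [NormedAddCommGroup H] [InnerProductSpace ℝ H]

theorem Submodule.norm_orthogonalProjectionOnto_eq_iff (K : Submodule ℝ H)
    [K.HasOrthogonalProjection] (x y : H) :
    ‖K.orthogonalProjectionOnto x‖ = ‖K.orthogonalProjectionOnto y‖ ↔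
      ⟪(K.orthogonalProjectionOnto (x + y) : H), K.orthogonalProjectionOnto (x - y)⟫ = 0 := by
  rw [← coe_inner, map_add, map_sub, real_inner_add_sub_eq_zero_iff]

theorem doesNormRetrieval_iff_forall_inner_eq_zero [FiniteDimensional ℝ H] {ι : Type*}
    (W : ι → Submodule ℝ H) :
    DoesNormRetrieval W ↔ ∀ u w : H,
      (∀ i, ⟪((W i).orthogonalProjectionOnto u : H), (W i).orthogonalProjectionOnto w⟫ = 0) →
        ⟪u, w⟫ = 0 := by
  simp_rw [DoesNormRetrieval, norm_orthogonalProjectionOnto_eq_iff,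
    ← real_inner_add_sub_eq_zero_iff]
  refine ⟨fun h u w huw => ?_, fun h x y => h (x + y) (x - y)⟩
  have hsum : (2⁻¹ : ℝ) • (u + w) + (2⁻¹ : ℝ) • (u - w) = u := by module
  have hdiff : (2⁻¹ : ℝ) • (u + w) - (2⁻¹ : ℝ) • (u - w) = w := by module
  have := h ((2⁻¹ : ℝ) • (u + w)) ((2⁻¹ : ℝ) • (u - w))
  rw [hsum, hdiff] at this
  exact this huw

end Real

/-- The projections `{P_i}_{i=1}^M` onto subspaces `{W_i}_{i=1}^M` do norm retrieval iff
for every choice of orthonormal bases `{φ_{i,j}}_{j=1}^{d_i}` of the `W_i` and every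
subcollection `S` of the index pairs `(i,j)`, the orthogonal complement of the span of
`{φ_{i,j} : (i,j) ∈ S}` is orthogonal to the orthogonal complement of the span of
`{φ_{i,j} : (i,j) ∈ Sᶜ}`. -/
theorem stmt_15 {H : Type*} [NormedAddCommGroup H] [InnerProductSpace ℝ H]
    [FiniteDimensional ℝ H] {M : ℕ}
    (W : Fin M → Submodule ℝ H) :
    DoesNormRetrieval W ↔
      ∀ φ : (i : Fin M) → Fin (Module.finrank ℝ (W i)) → H,
        (∀ i, Orthonormal ℝ (φ i)) →
        (∀ i, Submodule.span ℝ (Set.range (φ i)) = W i) →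
        ∀ S : Set ((i : Fin M) × Fin (Module.finrank ℝ (W i))),
          ∀ u ∈ (Submodule.span ℝ {v : H | ∃ p ∈ S, φ p.1 p.2 = v})ᗮ,
            ∀ w ∈ (Submodule.span ℝ {v : H | ∃ p ∈ Sᶜ, φ p.1 p.2 = v})ᗮ,
              ⟪u, w⟫ = 0 := by
  simp only [doesNormRetrieval_iff_forall_inner_eq_zero, mem_orthogonal_span_iff]
  constructor
  · intro h φ hφ hspan S u hu w hw
    refine h u w fun i => ?_
    rw [(hφ i).inner_orthogonalProjectionOnto_eq_sum (hspan i)]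
    refine Finset.sum_eq_zero fun j _ => ?_
    by_cases hj : ⟨i, j⟩ ∈ S
    · rw [real_inner_comm, hu _ ⟨_, hj, rfl⟩, zero_mul]
    · rw [hw _ ⟨_, hj, rfl⟩, mul_zero]
  · intro h u w huw
    choose B hB using fun i =>
      exists_orthonormalBasis_inner_eq_zero_or_inner_eq_zero (𝕜 := ℝ) (E := W i) (huw i)
    simp only [inner_orthogonalProjectionOnto_eq_of_mem_right] at hB
    refine h (fun i j => B i j) (fun i => (B i).orthonormal.comp_linearIsometry (W i).subtypeₗᵢ)
      (fun i => (B i).span_range_coe) {p | ⟪u, B p.1 p.2⟫ = 0} u ?_ w ?_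
    · rintro _ ⟨p, hp, rfl⟩
      exact (real_inner_comm _ _).trans hp
    · rintro _ ⟨p, hp, rfl⟩
      exact (real_inner_comm _ _).trans ((hB p.1 p.2).resolve_left hp)
end
end

section
/- If {φ_i}_{i=1}^N is a family of exactly N vectors in an N-dimensional real inner product space H that does norm retrieval, then the vectors are pairwise orthogonal: ⟨φ_i, φ_j⟩ = 0 for all i ≠ j. -/
/-!
Dropping `φ i` leaves `N - 1` vectors, so some `x ≠ 0` is orthogonal to all of them. Norm
retrieval forces such an `x` into the line `ℝ ∙ φ i`, and then `x ⊥ φ j` gives `φ i ⊥ φ j`.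
-/

open scoped RealInnerProductSpace

noncomputable section

def DoesNormRetrievalVectors {H : Type*} [NormedAddCommGroup H] [InnerProductSpace ℝ H]
    [FiniteDimensional ℝ H] {ι : Type*} (φ : ι → H) : Prop :=
  ∀ x y : H, (∀ i : ι, |⟪x, φ i⟫| = |⟪y, φ i⟫|) → ‖x‖ = ‖y‖

open Module InnerProductGeometry

theorem exists_ne_zero_forall_inner_eq_zero_of_card_lt {𝕜 E ι : Type*} [RCLike 𝕜]
    [NormedAddCommGroup E] [InnerProductSpace 𝕜 E] [FiniteDimensional 𝕜 E] [Fintype ι]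
    (v : ι → E) (h : Fintype.card ι < finrank 𝕜 E) :
    ∃ x : E, x ≠ 0 ∧ ∀ k, inner 𝕜 x (v k) = 0 := by
  set V := Submodule.span 𝕜 (Set.range v)
  have hV : V ≠ ⊤ := by
    intro hV
    have : finrank 𝕜 V ≤ Fintype.card ι := finrank_range_le_card v
    rw [hV, finrank_top] at this
    omega
  obtain ⟨x, hxV, hx0⟩ :=
    Submodule.exists_mem_ne_zero_of_ne_bot (Submodule.orthogonal_eq_bot_iff.not.2 hV)
  exact ⟨x, hx0, fun k => (Submodule.mem_orthogonal' V x).1 hxV _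
    (Submodule.subset_span (Set.mem_range_self k))⟩

namespace DoesNormRetrievalVectors

variable {H ι : Type*} [NormedAddCommGroup H] [InnerProductSpace ℝ H] [FiniteDimensional ℝ H]
  {φ : ι → H}

theorem inner_eq_zero (hφ : DoesNormRetrievalVectors φ) {x y : H}
    (h : ∀ k, |⟪x + y, φ k⟫| = |⟪x - y, φ k⟫|) : ⟪x, y⟫ = 0 :=
  (inner_eq_zero_iff_angle_eq_pi_div_two x y).2
    ((norm_add_eq_norm_sub_iff_angle_eq_pi_div_two x y).1 (hφ _ _ h))

/-- For `y ⊥ φ i`, the vectors `x + y` and `x - y` have the same coefficients up to sign, so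
`x ⊥ y`; hence `x ∈ (ℝ ∙ φ i)ᗮᗮ`. -/
theorem mem_span_singleton (hφ : DoesNormRetrievalVectors φ) {i : ι} {x : H}
    (hx : ∀ k, k ≠ i → ⟪x, φ k⟫ = 0) : x ∈ ℝ ∙ φ i := by
  rw [← Submodule.orthogonal_orthogonal (ℝ ∙ φ i), Submodule.mem_orthogonal']
  intro y hy
  rw [Submodule.mem_orthogonal_singleton_iff_inner_left] at hy
  rw [real_inner_comm]
  refine hφ.inner_eq_zero fun k => ?_
  rw [inner_add_left, inner_sub_left]
  by_cases hk : k = i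
  · subst hk
    simp [hy]
  · simp [hx k hk]

end DoesNormRetrievalVectors

/-- If a family of exactly `N` vectors does norm retrieval in an `N`-dimensional real
inner product space, then the vectors are pairwise orthogonal. -/
theorem stmt_17 {H : Type*} [NormedAddCommGroup H] [InnerProductSpace ℝ H]
    [FiniteDimensional ℝ H] {N : ℕ} (hdim : Module.finrank ℝ H = N)
    (φ : Fin N → H) (hφ : DoesNormRetrievalVectors φ) :
    ∀ i j : Fin N, i ≠ j → ⟪φ i, φ j⟫ = 0 := by
  intro i j hij
  obtain ⟨x, hx0, hx⟩ := exists_ne_zero_forall_inner_eq_zero_of_card_lt (𝕜 := ℝ)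
    (fun k : {k // k ≠ i} => φ k) (by simpa [hdim] using i.pos)
  obtain ⟨c, rfl⟩ := Submodule.mem_span_singleton.1 (hφ.mem_span_singleton fun k hk => hx ⟨k, hk⟩)
  have hc : c ≠ 0 := by rintro rfl; simp at hx0
  simpa [real_inner_smul_left, hc] using hx ⟨j, hij.symm⟩
end
end

section
/- Let {φ_i}_{i=1}^N be a Parseval frame for a finite-dimensional real inner product space H, let I ⊆ {1,...,N}, and set W_I = span{φ_i : i ∈ I} and W_{I^c} = span{φ_i : i ∈ I^c}. If W_I ∩ W_{I^c} = {0}, then W_I and W_{I^c} are orthogonal: ⟨u, v⟩ = 0 for all u ∈ W_I and v ∈ W_{I^c}. -/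
/-!
Parseval's identity says that the analysis operator `x ↦ (⟪x, φ i⟫)ᵢ` is an isometry; polarizing,
a Parseval frame reconstructs every vector, `x = ∑ ⟪x, φ i⟫ • φ i`. Splitting this sum along `I`
writes `u ∈ W_I` as `u_I + u_{Iᶜ}` with `u_J ∈ W_J`. Then `u_{Iᶜ} = u - u_I` lies in
`W_I ⊓ W_{Iᶜ} = ⊥`, so `0 = ⟪u, u_{Iᶜ}⟫ = ∑_{i ∉ I} ⟪u, φ i⟫ ^ 2`, and `u ⊥ φ i` for every `i ∉ I`.
-/

open scoped RealInnerProductSpace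

noncomputable section

variable {ι H : Type*} [NormedAddCommGroup H] [InnerProductSpace ℝ H]

def analysisOperator (φ : ι → H) : H →ₗ[ℝ] EuclideanSpace ℝ ι :=
  (EuclideanSpace.equiv ι ℝ).symm.toLinearMap ∘ₗ LinearMap.pi fun i => innerₛₗ ℝ (φ i)

@[simp]
lemma analysisOperator_apply (φ : ι → H) (x : H) (i : ι) : analysisOperator φ x i = ⟪x, φ i⟫ :=
  real_inner_comm _ _

variable [Fintype ι]

def IsParsevalFrame (φ : ι → H) : Prop := ∀ x : H, ∑ i, |⟪x, φ i⟫| ^ 2 = ‖x‖ ^ 2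

/-- `∑_{i ∈ J} ⟪x, φ i⟫ • φ i`, written with an indicator so that `J` need not be decidable. -/
def frameComponent (φ : ι → H) (J : Set ι) (x : H) : H :=
  ∑ i, J.indicator (fun i => ⟪x, φ i⟫ • φ i) i

lemma frameComponent_mem_span (φ : ι → H) (J : Set ι) (x : H) :
    frameComponent φ J x ∈ Submodule.span ℝ (φ '' J) := by
  refine Submodule.sum_mem _ fun i _ => ?_
  by_cases hi : i ∈ J
  · rw [Set.indicator_of_mem hi]
    exact Submodule.smul_mem _ _ (Submodule.subset_span (Set.mem_image_of_mem φ hi))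
  · rw [Set.indicator_of_notMem hi]
    exact Submodule.zero_mem _

lemma inner_frameComponent (φ : ι → H) (J : Set ι) (x : H) :
    ⟪x, frameComponent φ J x⟫ = ∑ i, J.indicator (fun i => ⟪x, φ i⟫ ^ 2) i := by
  rw [frameComponent, inner_sum]
  refine Finset.sum_congr rfl fun i _ => ?_
  by_cases hi : i ∈ J <;> simp [hi, real_inner_smul_right, sq]

namespace IsParsevalFrame

variable {φ : ι → H}

def analysisIsometry (hφ : IsParsevalFrame φ) : H →ₗᵢ[ℝ] EuclideanSpace ℝ ι where
  toLinearMap := analysisOperator φ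
  norm_map' x := by
    rw [← sq_eq_sq₀ (norm_nonneg _) (norm_nonneg _), EuclideanSpace.norm_sq_eq, ← hφ x]
    simp

lemma sum_inner_mul_inner (hφ : IsParsevalFrame φ) (x y : H) :
    ∑ i, ⟪x, φ i⟫ * ⟪y, φ i⟫ = ⟪x, y⟫ := by
  rw [← hφ.analysisIsometry.inner_map_map, PiLp.inner_apply]
  simp [analysisIsometry, mul_comm]

lemma sum_inner_smul_self (hφ : IsParsevalFrame φ) (x : H) : ∑ i, ⟪x, φ i⟫ • φ i = x := by
  refine ext_inner_right ℝ fun z => ?_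
  rw [sum_inner, ← hφ.sum_inner_mul_inner]
  exact Finset.sum_congr rfl fun i _ => by rw [real_inner_smul_left, real_inner_comm z (φ i)]

lemma frameComponent_add_compl (hφ : IsParsevalFrame φ) (J : Set ι) (x : H) :
    frameComponent φ J x + frameComponent φ Jᶜ x = x := by
  simp only [frameComponent, ← Finset.sum_add_distrib, Set.indicator_self_add_compl_apply,
    hφ.sum_inner_smul_self]

lemma inner_eq_zero_of_mem_span (hφ : IsParsevalFrame φ) {J : Set ι}
    (hJ : Submodule.span ℝ (φ '' J) ⊓ Submodule.span ℝ (φ '' Jᶜ) = ⊥) {u : H}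
    (hu : u ∈ Submodule.span ℝ (φ '' J)) {i : ι} (hi : i ∉ J) : ⟪u, φ i⟫ = 0 := by
  have hcompl : frameComponent φ Jᶜ u = 0 := by
    refine Submodule.disjoint_def.mp (disjoint_iff.mpr hJ) _ ?_ (frameComponent_mem_span φ Jᶜ u)
    rw [eq_sub_of_add_eq' (hφ.frameComponent_add_compl J u)]
    exact Submodule.sub_mem _ hu (frameComponent_mem_span φ J u)
  have hsum : ∑ j, Jᶜ.indicator (fun j => ⟪u, φ j⟫ ^ 2) j = 0 := by
    rw [← inner_frameComponent, hcompl, inner_zero_right]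
  have hsq := (Finset.sum_eq_zero_iff_of_nonneg fun j _ =>
    Set.indicator_nonneg (fun j _ => sq_nonneg ⟪u, φ j⟫) j).mp hsum i (Finset.mem_univ i)
  rw [Set.indicator_of_mem (Set.mem_compl hi)] at hsq
  exact pow_eq_zero_iff two_ne_zero |>.mp hsq

end IsParsevalFrame

end

theorem stmt_19_general {H : Type*} [NormedAddCommGroup H] [InnerProductSpace ℝ H]
    {N : ℕ} (φ : Fin N → H)
    (hparseval : ∀ x : H, ∑ i : Fin N, |⟪x, φ i⟫| ^ 2 = ‖x‖ ^ 2)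
    (I : Set (Fin N))
    (hmeet : Submodule.span ℝ (φ '' I) ⊓ Submodule.span ℝ (φ '' Iᶜ) = ⊥) :
    ∀ u ∈ Submodule.span ℝ (φ '' I), ∀ v ∈ Submodule.span ℝ (φ '' Iᶜ), ⟪u, v⟫ = 0 := by
  have hφ : IsParsevalFrame φ := hparseval
  refine Submodule.isOrtho_iff_inner_eq.mp (Submodule.isOrtho_span.mpr ?_)
  rintro _ ⟨j, hj, rfl⟩ _ ⟨i, hi, rfl⟩
  exact hφ.inner_eq_zero_of_mem_span hmeet (Submodule.subset_span ⟨j, hj, rfl⟩) hi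

/-- If `{φ_i}_{i=1}^N` is a Parseval frame for a finite-dimensional real inner product
space, `I` is a set of indices, `W_I` and `W_{I^c}` are the spans of the corresponding
frame vectors, and `W_I ∩ W_{I^c} = {0}`, then `W_I ⊥ W_{I^c}`. -/
theorem stmt_19 {H : Type*} [NormedAddCommGroup H] [InnerProductSpace ℝ H]
    [FiniteDimensional ℝ H] {N : ℕ} (φ : Fin N → H)
    (hparseval : ∀ x : H, ∑ i : Fin N, |⟪x, φ i⟫| ^ 2 = ‖x‖ ^ 2)
    (I : Set (Fin N))
    (hmeet : Submodule.span ℝ (φ '' I) ⊓ Submodule.span ℝ (φ '' Iᶜ) = ⊥) :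
    ∀ u ∈ Submodule.span ℝ (φ '' I), ∀ v ∈ Submodule.span ℝ (φ '' Iᶜ), ⟪u, v⟫ = 0 :=
  stmt_19_general φ hparseval I hmeet
end
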